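/- arXiv:1005.3871 — 2 statements merged into one kernel-verified Lean document; each statement's English description precedes it below -/
import Mathlib

section
/- For every integer b ≥ 2 there exists a constant K > 0 (depending only on b) such that for all real t ≥ 1, the sum ∑ 1/(ℓ·ord_ℓ(b)), taken over all primes ℓ with ℓ ∤ b and ℓ·ord_ℓ(b) ≥ t, is at most K·t^{−1/3}. -/
/-!
Group the primes `ℓ` by `d = ord_ℓ(b)`. Such primes are `≡ 1 (mod d)` and divide `b ^ d - 1`,
so there are at most `b * d` of them and the `k`-th smallest is at least `k * d`. Interpolating
between `ℓ * d ≥ t` and `ℓ * d ≥ k * d ^ 2` bounds the sum over the fibre of `d` by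
`O(t ^ (c - 1) * d ^ (1 - 3 * c))` for each `0 ≤ c < 1`. Taking `c = 1/3` for the at most
`t ^ (1/3)` values `d ≤ t ^ (1/3)`, and `c = 5/6` for `d > t ^ (1/3)`, where `∑ d ^ (-3/2)`
converges, both ranges contribute `O(t ^ (-1/3))`.
-/

open Finset Real

theorem mul_rpow_sub_one_le_rpow_sub_rpow_sub_one {c z : ℝ} (hc0 : 0 ≤ c) (hc1 : c ≤ 1)
    (hz : 1 ≤ z) : c * z ^ (c - 1) ≤ z ^ c - (z - 1) ^ c := by
  have hz0 : 0 < z := by linarith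
  have hbern : (1 + -z⁻¹) ^ c ≤ 1 + c * -z⁻¹ :=
    rpow_one_add_le_one_add_mul_self (by simpa using inv_le_one_of_one_le₀ hz) hc0 hc1
  have hsplit : (z - 1) ^ c = z ^ c * (1 + -z⁻¹) ^ c := by
    rw [← mul_rpow hz0.le (by simpa [← sub_eq_add_neg] using inv_le_one_of_one_le₀ hz)]
    congr 1
    field_simp
    ring
  rw [hsplit, rpow_sub_one hz0.ne']
  have := mul_le_mul_of_nonneg_left hbern (rpow_nonneg hz0.le c)
  linarith [show z ^ c * (1 + c * -z⁻¹) = z ^ c - c * (z ^ c / z) by field_simp; ring]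

theorem rpow_sub_rpow_sub_one_le_mul_rpow_sub_one {c z : ℝ} (hc0 : -1 ≤ c) (hc1 : c ≤ 0)
    (hz : 1 < z) : z ^ c - (z - 1) ^ c ≤ c * z ^ (c - 1) := by
  have hz0 : 0 < z := by linarith
  have hz1 : 0 < z - 1 := by linarith
  have h := mul_rpow_sub_one_le_rpow_sub_rpow_sub_one (c := -c) (by linarith) (by linarith) hz.le
  have hle : z ^ c ≤ (z - 1) ^ c := rpow_le_rpow_of_nonpos hz1 (by linarith) hc1
  rw [rpow_sub_one hz0.ne'] at h ⊢
  rw [rpow_neg hz0.le, rpow_neg hz1.le] at h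
  have hzc : 0 < z ^ c := rpow_pos_of_pos hz0 c
  have hz1c : 0 < (z - 1) ^ c := rpow_pos_of_pos hz1 c
  field_simp at h ⊢
  nlinarith [mul_le_mul_of_nonneg_left hle (by linarith : 0 ≤ -c)]

theorem sum_rpow_neg_le {c : ℝ} (hc0 : 0 ≤ c) (hc1 : c < 1) (S : Finset ℕ)
    (hS : ∀ m ∈ S, 0 < m) : ∑ m ∈ S, (m : ℝ) ^ (-c) ≤ (#S : ℝ) ^ (1 - c) / (1 - c) := by
  induction S using Finset.induction_on_max with
  | empty => simp only [sum_empty, card_empty, Nat.cast_zero]; positivity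
  | insert a s hlt ih =>
    have ha : a ∉ s := fun h => (hlt a h).false
    have hcard : #s + 1 ≤ a := by
      have : s ⊆ Ioo 0 a := fun m hm => mem_Ioo.2 ⟨hS m (mem_insert_of_mem hm), hlt m hm⟩
      have hle := card_le_card this
      rw [Nat.card_Ioo] at hle
      have := hS a (mem_insert_self a s)
      omega
    have hstep := mul_rpow_sub_one_le_rpow_sub_rpow_sub_one (c := 1 - c) (z := #s + 1)
      (by linarith) (by linarith) (by simp)
    have hmono : (a : ℝ) ^ (-c) ≤ ((#s : ℝ) + 1) ^ (-c) :=
      rpow_le_rpow_of_nonpos (by positivity) (by exact_mod_cast hcard) (by linarith)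
    rw [sum_insert ha, card_insert_of_notMem ha, Nat.cast_succ, le_div_iff₀ (by linarith)]
    rw [le_div_iff₀ (by linarith)] at ih
    simp only [sub_sub_cancel_left, add_sub_cancel_right] at hstep
    nlinarith [ih fun m hm => hS m (mem_insert_of_mem hm)]

theorem sum_rpow_neg_sub_one_le {γ : ℝ} (hγ0 : 0 < γ) (hγ1 : γ ≤ 1) (S : Finset ℕ) {n : ℕ}
    (hn : 0 < n) (hS : ∀ d ∈ S, n < d) : ∑ d ∈ S, (d : ℝ) ^ (-γ - 1) ≤ (n : ℝ) ^ (-γ) / γ := by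
  induction S using Finset.induction_on_min generalizing n with
  | empty => simp only [sum_empty]; positivity
  | insert a s hlt ih =>
    have ha : a ∉ s := fun h => (hlt a h).false
    have hna : n < a := hS a (mem_insert_self a s)
    have hstep := rpow_sub_rpow_sub_one_le_mul_rpow_sub_one (c := -γ) (z := a)
      (by linarith) (by linarith) (by norm_cast; omega)
    have hmono : ((a : ℝ) - 1) ^ (-γ) ≤ (n : ℝ) ^ (-γ) :=
      rpow_le_rpow_of_nonpos (by exact_mod_cast hn) (by
        have : (n : ℝ) + 1 ≤ a := by exact_mod_cast hna
        linarith) (by linarith)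
    rw [sum_insert ha, le_div_iff₀ hγ0, add_mul]
    have := ih (hn.trans hna) hlt
    rw [le_div_iff₀ hγ0] at this
    nlinarith

theorem one_div_le_rpow_mul_rpow {t y z c : ℝ} (ht : 0 < t) (hty : t ≤ y) (hz : 0 < z)
    (hzy : z ≤ y) (hc0 : 0 ≤ c) (hc1 : c ≤ 1) : 1 / y ≤ t ^ (c - 1) * z ^ (-c) := by
  have hy : 0 < y := ht.trans_le hty
  calc 1 / y = y ^ (c - 1) * y ^ (-c) := by
        rw [← rpow_add hy, show c - 1 + -c = -1 by ring, rpow_neg_one, one_div]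
    _ ≤ t ^ (c - 1) * z ^ (-c) :=
        mul_le_mul (rpow_le_rpow_of_nonpos ht hty (by linarith))
          (rpow_le_rpow_of_nonpos hz hzy (by linarith)) (by positivity) (by positivity)

theorem orderOf_natCast_dvd_sub_one {ℓ b : ℕ} (hℓ : ℓ.Prime) (hb : ¬ℓ ∣ b) :
    orderOf (b : ZMod ℓ) ∣ ℓ - 1 :=
  haveI := Fact.mk hℓ
  ZMod.orderOf_dvd_card_sub_one (by rwa [Ne, ZMod.natCast_eq_zero_iff])

theorem orderOf_natCast_pos {ℓ b : ℕ} (hℓ : ℓ.Prime) (hb : ¬ℓ ∣ b) :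
    0 < orderOf (b : ZMod ℓ) :=
  Nat.pos_of_dvd_of_pos (orderOf_natCast_dvd_sub_one hℓ hb) (by have := hℓ.two_le; omega)

theorem dvd_pow_orderOf_natCast_sub_one (n b : ℕ) : n ∣ b ^ orderOf (b : ZMod n) - 1 := by
  rcases Nat.eq_zero_or_pos (b ^ orderOf (b : ZMod n)) with h | h
  · simp [h]
  · rw [← ZMod.natCast_eq_zero_iff, Nat.cast_sub h, Nat.cast_pow, pow_orderOf_eq_one]
    simp

theorem two_pow_card_le_of_forall_prime_dvd {N : ℕ} (hN : N ≠ 0) (v : Finset ℕ)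
    (hv : ∀ p ∈ v, p.Prime ∧ p ∣ N) : 2 ^ #v ≤ N :=
  calc 2 ^ #v = ∏ _p ∈ v, 2 := (prod_const 2).symm
    _ ≤ ∏ p ∈ v, p := prod_le_prod' fun p hp => (hv p hp).1.two_le
    _ ≤ N := Nat.le_of_dvd (Nat.pos_of_ne_zero hN)
        (prod_primes_dvd N (fun p hp => (hv p hp).1.prime) fun p hp => (hv p hp).2)

theorem card_le_mul_of_forall_orderOf_eq {b d : ℕ} (hb : 2 ≤ b) (hd : 0 < d) (v : Finset ℕ)
    (hv : ∀ ℓ ∈ v, ℓ.Prime ∧ orderOf (b : ZMod ℓ) = d) : #v ≤ b * d := by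
  have hbd : 2 ≤ b ^ d := hb.trans (Nat.le_self_pow hd.ne' b)
  have hcard := two_pow_card_le_of_forall_prime_dvd (N := b ^ d - 1) (by omega) v fun ℓ hℓ =>
    ⟨(hv ℓ hℓ).1, (hv ℓ hℓ).2 ▸ dvd_pow_orderOf_natCast_sub_one ℓ b⟩
  have : b ^ d ≤ 2 ^ (b * d) := by
    rw [pow_mul]
    exact Nat.pow_le_pow_left Nat.lt_two_pow_self.le d
  exact (Nat.pow_lt_pow_iff_right one_lt_two).mp (by omega) |>.le

theorem sum_one_div_mul_le_of_forall_orderOf_eq {b d : ℕ} {t c : ℝ} (hb : 2 ≤ b) (hd : 0 < d)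
    (ht : 0 < t) (hc0 : 0 ≤ c) (hc1 : c < 1) (v : Finset ℕ)
    (hv : ∀ ℓ ∈ v, ℓ.Prime ∧ ¬ℓ ∣ b ∧ orderOf (b : ZMod ℓ) = d ∧ t ≤ ℓ * d) :
    ∑ ℓ ∈ v, 1 / ((ℓ : ℝ) * d) ≤ b ^ (1 - c) * t ^ (c - 1) * (d : ℝ) ^ (1 - 3 * c) / (1 - c) := by
  have hmod : ∀ ℓ ∈ v, ℓ % d = 1 % d ∧ d < ℓ := by
    intro ℓ hℓ
    obtain ⟨hp, hnd, hord, -⟩ := hv ℓ hℓ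
    have hdvd : d ∣ ℓ - 1 := hord ▸ orderOf_natCast_dvd_sub_one hp hnd
    have := hp.two_le
    exact ⟨((Nat.modEq_iff_dvd' (by omega)).mpr hdvd).symm, by
      have := Nat.le_of_dvd (by omega) hdvd; omega⟩
  have hinj : Set.InjOn (· / d) v := fun x hx y hy hxy => by
    rw [← Nat.div_add_mod x d, ← Nat.div_add_mod y d, (hmod x hx).1, (hmod y hy).1]
    simp only at hxy
    rw [hxy]
  have hpos : ∀ m ∈ v.image (· / d), 0 < m := by
    simp only [mem_image]
    rintro m ⟨ℓ, hℓ, rfl⟩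
    exact Nat.div_pos (hmod ℓ hℓ).2.le hd
  have hD : (0 : ℝ) < d := by exact_mod_cast hd
  have hpoint : ∀ ℓ ∈ v, 1 / ((ℓ : ℝ) * d)
      ≤ t ^ (c - 1) * ((d : ℝ) ^ 2) ^ (-c) * ((ℓ / d : ℕ) : ℝ) ^ (-c) := by
    intro ℓ hℓ
    have hm : (0 : ℝ) < (ℓ / d : ℕ) := by exact_mod_cast hpos _ (mem_image_of_mem _ hℓ)
    have hmd : ((ℓ / d : ℕ) : ℝ) * d ≤ ℓ := by exact_mod_cast Nat.div_mul_le_self ℓ d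
    calc 1 / ((ℓ : ℝ) * d) ≤ t ^ (c - 1) * (((ℓ / d : ℕ) : ℝ) * d ^ 2) ^ (-c) :=
          one_div_le_rpow_mul_rpow ht (hv ℓ hℓ).2.2.2 (by positivity) (by nlinarith) hc0 hc1.le
      _ = _ := by rw [mul_rpow hm.le (by positivity)]; ring
  have hcard : (#v : ℝ) ≤ b * d := by
    exact_mod_cast card_le_mul_of_forall_orderOf_eq hb hd v fun ℓ hℓ =>
      ⟨(hv ℓ hℓ).1, (hv ℓ hℓ).2.2.1⟩
  calc ∑ ℓ ∈ v, 1 / ((ℓ : ℝ) * d)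
      ≤ t ^ (c - 1) * ((d : ℝ) ^ 2) ^ (-c) * ∑ m ∈ v.image (· / d), (m : ℝ) ^ (-c) := by
        rw [sum_image hinj, mul_sum]
        exact sum_le_sum hpoint
    _ ≤ t ^ (c - 1) * ((d : ℝ) ^ 2) ^ (-c) * (((b : ℝ) * d) ^ (1 - c) / (1 - c)) := by
        gcongr
        refine (sum_rpow_neg_le hc0 hc1 _ hpos).trans ?_
        rw [card_image_of_injOn hinj]
        gcongr
    _ = b ^ (1 - c) * t ^ (c - 1) * (d : ℝ) ^ (1 - 3 * c) / (1 - c) := by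
        rw [mul_rpow (by positivity) hD.le, ← rpow_natCast, ← rpow_mul hD.le,
          show (1 : ℝ) - 3 * c = (2 : ℕ) * -c + (1 - c) by push_cast; ring, rpow_add hD]
        ring

theorem sum_le_of_le_of_le_rpow {E : Finset ℕ} (hE : ∀ d ∈ E, 0 < d) {F : ℕ → ℝ} {t A B : ℝ}
    (ht : 1 ≤ t) (hA0 : 0 ≤ A) (hB : 0 ≤ B) (hA : ∀ d ∈ E, F d ≤ A * t ^ (-(2 / 3) : ℝ))
    (hdecay : ∀ d ∈ E, F d ≤ B * t ^ (-(1 / 6) : ℝ) * (d : ℝ) ^ (-(1 / 2) - 1 : ℝ)) :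
    ∑ d ∈ E, F d ≤ (2 * A + 2 * B) * t ^ (-(1 / 3) : ℝ) := by
  have ht0 : 0 < t := by linarith
  set x := t ^ (1 / 3 : ℝ) with hx
  have hx1 : 1 ≤ x := one_le_rpow ht (by norm_num)
  set n := ⌈x⌉₊
  have hn : 0 < n := Nat.ceil_pos.mpr (by linarith)
  have hxn : x ≤ n := Nat.le_ceil x
  have hn2x : (n : ℝ) ≤ 2 * x := by linarith [Nat.ceil_lt_add_one (by linarith : 0 ≤ x)]
  have hsmall : ∑ d ∈ E with d ≤ n, F d ≤ 2 * A * t ^ (-(1 / 3) : ℝ) := by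
    have hcard : (#(E.filter (· ≤ n)) : ℝ) ≤ n := by
      have : E.filter (· ≤ n) ⊆ Icc 1 n := fun d hd => by
        rw [mem_filter] at hd; exact mem_Icc.2 ⟨hE d hd.1, hd.2⟩
      exact_mod_cast (card_le_card this).trans (by simp)
    calc ∑ d ∈ E with d ≤ n, F d ≤ #(E.filter (· ≤ n)) * (A * t ^ (-(2 / 3) : ℝ)) := by
          rw [← nsmul_eq_mul, ← sum_const]
          exact sum_le_sum fun d hd => hA d (mem_filter.1 hd).1
      _ ≤ 2 * x * (A * t ^ (-(2 / 3) : ℝ)) := by gcongr; linarith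
      _ = 2 * A * (x * t ^ (-(2 / 3) : ℝ)) := by ring
      _ = 2 * A * t ^ (-(1 / 3) : ℝ) := by rw [hx, ← rpow_add ht0]; norm_num
  have hlarge : ∑ d ∈ E with ¬d ≤ n, F d ≤ 2 * B * t ^ (-(1 / 3) : ℝ) := by
    have htail := sum_rpow_neg_sub_one_le (γ := 1 / 2) (by norm_num) (by norm_num)
      (E.filter (¬· ≤ n)) hn fun d hd => not_le.1 (mem_filter.1 hd).2
    have hnx : (n : ℝ) ^ (-(1 / 2) : ℝ) ≤ x ^ (-(1 / 2) : ℝ) :=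
      rpow_le_rpow_of_nonpos (by linarith) hxn (by norm_num)
    calc ∑ d ∈ E with ¬d ≤ n, F d
        ≤ B * t ^ (-(1 / 6) : ℝ) * ∑ d ∈ E with ¬d ≤ n, (d : ℝ) ^ (-(1 / 2) - 1 : ℝ) := by
          rw [mul_sum]
          exact sum_le_sum fun d hd => hdecay d (mem_filter.1 hd).1
      _ ≤ B * t ^ (-(1 / 6) : ℝ) * (2 * x ^ (-(1 / 2) : ℝ)) := by
          gcongr
          linarith
      _ = 2 * B * (t ^ (-(1 / 6) : ℝ) * x ^ (-(1 / 2) : ℝ)) := by ring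
      _ = 2 * B * t ^ (-(1 / 3) : ℝ) := by
          rw [hx, ← rpow_mul ht0.le, ← rpow_add ht0]; norm_num
  rw [← sum_filter_add_sum_filter_not E (· ≤ n)]
  linarith

theorem sum_one_div_mul_orderOf_le {b : ℕ} (hb : 2 ≤ b) {t : ℝ} (ht : 1 ≤ t) (u : Finset ℕ)
    (hu : ∀ ℓ ∈ u, ℓ.Prime ∧ ¬ℓ ∣ b ∧ t ≤ ℓ * orderOf (b : ZMod ℓ)) :
    ∑ ℓ ∈ u, 1 / ((ℓ : ℝ) * orderOf (b : ZMod ℓ)) ≤ 15 * b * t ^ (-(1 / 3) : ℝ) := by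
  set ord : ℕ → ℕ := fun ℓ => orderOf (b : ZMod ℓ)
  have hpos : ∀ d ∈ u.image ord, 0 < d := by
    simp only [mem_image]
    rintro d ⟨ℓ, hℓ, rfl⟩
    exact orderOf_natCast_pos (hu ℓ hℓ).1 (hu ℓ hℓ).2.1
  have hfiber : ∀ c : ℝ, 0 ≤ c → c < 1 → ∀ d ∈ u.image ord,
      ∑ ℓ ∈ u with ord ℓ = d, 1 / ((ℓ : ℝ) * ord ℓ)
        ≤ b ^ (1 - c) * t ^ (c - 1) * (d : ℝ) ^ (1 - 3 * c) / (1 - c) := by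
    intro c hc0 hc1 d hd
    rw [sum_congr rfl fun ℓ hℓ => by rw [(mem_filter.1 hℓ).2]]
    refine sum_one_div_mul_le_of_forall_orderOf_eq hb (hpos d hd) (by linarith) hc0 hc1 _ ?_
    intro ℓ hℓ
    obtain ⟨hℓu, rfl⟩ := mem_filter.1 hℓ
    exact ⟨(hu ℓ hℓu).1, (hu ℓ hℓu).2.1, rfl, (hu ℓ hℓu).2.2⟩
  have hb1 : (1 : ℝ) ≤ b := by exact_mod_cast (by omega : 1 ≤ b)
  rw [← sum_fiberwise_of_maps_to fun ℓ hℓ => mem_image_of_mem ord hℓ]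
  refine (sum_le_of_le_of_le_rpow hpos ht (A := 3 / 2 * b ^ (2 / 3 : ℝ)) (B := 6 * b ^ (1 / 6 : ℝ))
    (by positivity) (by positivity) (fun d hd => ?_) (fun d hd => ?_)).trans ?_
  · convert hfiber (1 / 3) (by norm_num) (by norm_num) d hd using 1
    norm_num
    ring
  · convert hfiber (5 / 6) (by norm_num) (by norm_num) d hd using 1
    norm_num
    ring
  · have h1 := rpow_le_self_of_one_le hb1 (by norm_num : (2 / 3 : ℝ) ≤ 1)
    have h2 := rpow_le_self_of_one_le hb1 (by norm_num : (1 / 6 : ℝ) ≤ 1)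
    gcongr
    linarith

/-- For every integer `b ≥ 2` there exists `K > 0` (depending only on `b`) such that for all
real `t ≥ 1`, the sum `∑ 1/(ℓ·ord_ℓ(b))` over primes `ℓ` with `ℓ ∤ b` and `ℓ·ord_ℓ(b) ≥ t`
is at most `K · t^(-1/3)`. -/
theorem stmt1 (b : ℕ) (hb : 2 ≤ b) :
    ∃ K : ℝ, 0 < K ∧ ∀ t : ℝ, 1 ≤ t →
      Summable (fun ℓ : {ℓ : ℕ // ℓ.Prime ∧ ¬ℓ ∣ b ∧
          t ≤ ((ℓ : ℕ) : ℝ) * (orderOf ((b : ZMod (ℓ : ℕ))) : ℝ)} =>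
        (1 : ℝ) / (((ℓ : ℕ) : ℝ) * (orderOf ((b : ZMod (ℓ : ℕ))) : ℝ))) ∧
      ∑' ℓ : {ℓ : ℕ // ℓ.Prime ∧ ¬ℓ ∣ b ∧
          t ≤ ((ℓ : ℕ) : ℝ) * (orderOf ((b : ZMod (ℓ : ℕ))) : ℝ)},
        (1 : ℝ) / (((ℓ : ℕ) : ℝ) * (orderOf ((b : ZMod (ℓ : ℕ))) : ℝ))
      ≤ K * t ^ (-(1 / 3 : ℝ)) := by
  refine ⟨15 * b, by positivity, fun t ht =>
    ⟨summable_of_sum_le (c := 15 * b * t ^ (-(1 / 3 : ℝ))) (fun _ => by positivity)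
      fun s => ?_, tsum_le_of_sum_le' (by positivity) fun s => ?_⟩⟩
  all_goals
    have := sum_one_div_mul_orderOf_le hb ht (s.map (Function.Embedding.subtype _))
      fun ℓ hℓ => by obtain ⟨ℓ, -, rfl⟩ := mem_map.1 hℓ; exact ℓ.2
    rwa [sum_map] at this
end

section
/- Let ℓ be a prime, k ≥ 1 an integer, and r an integer with r ≢ 0 (mod ℓ). Then |C_r(ℓ^k)| = ℓ^{3(k−1)}·|C_r(ℓ)|. -/
/-!
Reduction mod `ℓ` maps `C_r(ℓ^k)` to `C_r(ℓ)`, and writing `g = 1 + A` the fibre over `y`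
consists of the lifts `A` of `y - 1` with `det A = r`. As `r` is a unit mod `ℓ`, such a lift is
invertible, and multiplying by the inverse of one lift moves the fibre to the matrices `≡ 1` of a
fixed determinant `c`. These are parametrised by their entries `b, c', d` (the remaining entry is
`(c + b c') / d`), each ranging over a residue class mod `ℓ` of size `ℓ^(k-1)`.
-/

open Matrix

/-- `C_r(n)` is the set of matrices `g ∈ GL₂(ℤ/nℤ)` with `det g + 1 - tr g ≡ r (mod n)`. -/
def Cset (n : ℕ) (r : ℤ) : Set (GL (Fin 2) (ZMod n)) :=
  {g | Matrix.det (g : Matrix (Fin 2) (Fin 2) (ZMod n)) + 1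
        - Matrix.trace (g : Matrix (Fin 2) (Fin 2) (ZMod n)) = (r : ZMod n)}

theorem Nat.card_eq_mul_of_card_fiber {α β : Type*} [Finite α] [Finite β] (g : α → β) {n : ℕ}
    (h : ∀ b, Nat.card {a // g a = b} = n) : Nat.card α = n * Nat.card β := by
  have := Fintype.ofFinite β
  rw [Nat.card_congr (Equiv.sigmaFiberEquiv g).symm, Nat.card_sigma,
    Finset.sum_congr rfl fun b _ ↦ h b, Finset.sum_const, Finset.card_univ, smul_eq_mul,
    Nat.card_eq_fintype_card, mul_comm]

theorem card_fiber_eq_card_fiber_zero {G H F : Type*} [AddGroup G] [AddGroup H] [FunLike F G H]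
    [AddMonoidHomClass F G H] (f : F) (x₀ : G) :
    Nat.card {x // f x = f x₀} = Nat.card {x // f x = 0} :=
  Nat.card_congr <| (Equiv.subRight x₀).subtypeEquiv fun x ↦ by
    simp [sub_eq_zero]

theorem ZMod.card_castHom_fiber_zero {m n : ℕ} [NeZero n] (h : m ∣ n) :
    Nat.card {x : ZMod n // ZMod.castHom h (ZMod m) x = 0} = n / m := by
  have : NeZero m := ⟨fun hm ↦ NeZero.ne n (Nat.eq_zero_of_zero_dvd (hm ▸ h))⟩
  have key := Nat.card_eq_mul_of_card_fiber (ZMod.castHom h (ZMod m)) fun t ↦ by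
    obtain ⟨x₀, rfl⟩ := ZMod.castHom_surjective h t
    exact card_fiber_eq_card_fiber_zero _ x₀
  rw [Nat.card_zmod, Nat.card_zmod] at key
  exact (Nat.div_eq_of_eq_mul_left (Nat.pos_of_neZero m) key).symm

theorem ZMod.isLocalHom_castHom_pow {ℓ k : ℕ} (hℓ : ℓ.Prime) (hk : k ≠ 0) :
    IsLocalHom (ZMod.castHom (dvd_pow_self ℓ hk) (ZMod ℓ)) := by
  have : NeZero ℓ := ⟨hℓ.ne_zero⟩
  refine ⟨fun x hx ↦ ?_⟩
  rw [← ZMod.natCast_zmod_val x, map_natCast, ZMod.isUnit_iff_coprime, Nat.coprime_comm,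
    hℓ.coprime_iff_not_dvd] at hx
  rwa [← ZMod.natCast_zmod_val x, ZMod.isUnit_natCast_iff_not_dvd_pow hℓ (Nat.pos_of_ne_zero hk)]

variable {R S : Type*} [CommRing R] [CommRing S] (f : R →+* S)

theorem RingHom.mapMatrix_surjective {n : Type*} [Fintype n] [DecidableEq n]
    (hf : Function.Surjective f) :
    Function.Surjective (f.mapMatrix : Matrix n n R →+* Matrix n n S) := fun A ↦
  ⟨A.map (Function.surjInv hf), by ext i j; exact Function.surjInv_eq hf _⟩

instance RingHom.isLocalHom_mapMatrix {n : Type*} [Fintype n] [DecidableEq n] [IsLocalHom f] :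
    IsLocalHom (f.mapMatrix : Matrix n n R →+* Matrix n n S) where
  map_nonunit A hA := by
    rw [isUnit_iff_isUnit_det, ← RingHom.map_det] at hA
    exact (isUnit_iff_isUnit_det A).2 (hA.of_map f _)

theorem card_mapMatrix_det_fiber_eq_card_fiber_one {n : Type*} [Fintype n] [DecidableEq n]
    (U : GL n R) (u : R) :
    Nat.card {A : Matrix n n R // f.mapMatrix A = f.mapMatrix U ∧ A.det = u} =
      Nat.card {B : Matrix n n R // f.mapMatrix B = 1 ∧ B.det = (↑U⁻¹ : Matrix n n R).det * u} :=
  Nat.card_congr <| (Units.mulLeft U⁻¹).subtypeEquiv fun A ↦ by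
    simp only [Units.mulLeft, Equiv.coe_fn_mk, map_mul, det_mul,
      (isUnits_det_units U⁻¹).mul_right_inj]
    have hU : f.mapMatrix (↑U⁻¹ : Matrix n n R) =
        (↑(GeneralLinearGroup.map f U)⁻¹ : Matrix n n S) := rfl
    rw [hU, Units.inv_mul_eq_one, eq_comm]
    rfl

theorem RingHom.mapMatrix_eq_one_iff_fin_two {B : Matrix (Fin 2) (Fin 2) R} :
    f.mapMatrix B = 1 ↔ f (B 0 0) = 1 ∧ f (B 0 1) = 0 ∧ f (B 1 0) = 0 ∧ f (B 1 1) = 1 := by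
  simp [← Matrix.ext_iff, Fin.forall_fin_two, and_assoc]

theorem Matrix.apply_zero_zero_eq_of_det_fin_two {B : Matrix (Fin 2) (Fin 2) R}
    (hB : IsUnit (B 1 1)) {c : R} (hc : B.det = c) :
    B 0 0 = (c + B 0 1 * B 1 0) * Ring.inverse (B 1 1) := by
  rw [← hc, det_fin_two, sub_add_cancel, mul_assoc, Ring.mul_inverse_cancel _ hB, mul_one]

theorem card_mapMatrix_det_fiber_one [IsLocalHom f] {c : R} (hc : f c = 1) :
    Nat.card {B : Matrix (Fin 2) (Fin 2) R // f.mapMatrix B = 1 ∧ B.det = c} =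
      Nat.card {x // f x = 0} ^ 3 := by
  have isUnit_of_map_eq_one {d : R} (hd : f d = 1) : IsUnit d :=
    IsUnit.of_map f d (hd.symm ▸ isUnit_one)
  have map_inverse {d : R} (hd : f d = 1) : f (Ring.inverse d) = 1 := by
    simpa [hd] using congrArg f (Ring.mul_inverse_cancel d (isUnit_of_map_eq_one hd))
  let e : {B : Matrix (Fin 2) (Fin 2) R // f.mapMatrix B = 1 ∧ B.det = c} ≃
      {d // f d = 1} × {x // f x = 0} × {x // f x = 0} :=
    { toFun B :=
        have hB := (f.mapMatrix_eq_one_iff_fin_two).1 B.2.1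
        (⟨B.1 1 1, hB.2.2.2⟩, ⟨B.1 0 1, hB.2.1⟩, ⟨B.1 1 0, hB.2.2.1⟩)
      invFun p := ⟨!![(c + p.2.1 * p.2.2) * Ring.inverse p.1.1, p.2.1; p.2.2, p.1.1], by
        refine ⟨(f.mapMatrix_eq_one_iff_fin_two).2 ?_, ?_⟩
        · simp [hc, p.1.2, p.2.1.2, p.2.2.2, map_inverse]
        · rw [det_fin_two_of, mul_assoc, Ring.inverse_mul_cancel _ (isUnit_of_map_eq_one p.1.2)]
          ring⟩
      left_inv B := by
        obtain ⟨B, hB, hdet⟩ := B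
        have h11 := isUnit_of_map_eq_one ((f.mapMatrix_eq_one_iff_fin_two).1 hB).2.2.2
        ext i j
        fin_cases i <;> fin_cases j <;> simp [apply_zero_zero_eq_of_det_fin_two h11 hdet]
      right_inv p := rfl }
  rw [Nat.card_congr e, Nat.card_prod, Nat.card_prod, ← map_one f, card_fiber_eq_card_fiber_zero]
  ring

theorem card_mapMatrix_det_fiber [IsLocalHom f] {A₀ : Matrix (Fin 2) (Fin 2) R}
    (hA₀ : IsUnit A₀.det) {u : R} (hu : f u = f A₀.det) :
    Nat.card {A // f.mapMatrix A = f.mapMatrix A₀ ∧ A.det = u} = Nat.card {x // f x = 0} ^ 3 := by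
  lift A₀ to GL (Fin 2) R using (isUnit_iff_isUnit_det _).2 hA₀
  rw [card_mapMatrix_det_fiber_eq_card_fiber_one, card_mapMatrix_det_fiber_one]
  rw [map_mul, hu, ← map_mul, ← det_mul, ← Units.val_mul, inv_mul_cancel, Units.val_one, det_one,
    map_one]

theorem Matrix.GeneralLinearGroup.coe_map_sub_one {ι : Type*} [Fintype ι] [DecidableEq ι]
    (g : GL ι R) :
    (↑(GeneralLinearGroup.map f g) : Matrix ι ι S) - 1 = f.mapMatrix (↑g - 1) := by
  rw [map_sub, map_one]
  rfl

theorem Matrix.det_sub_one_fin_two (A : Matrix (Fin 2) (Fin 2) R) :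
    (A - 1).det = A.det + 1 - A.trace := by
  simp [det_fin_two, trace_fin_two]
  ring

theorem mem_Cset_iff {n : ℕ} {r : ℤ} {g : GL (Fin 2) (ZMod n)} :
    g ∈ Cset n r ↔ ((g : Matrix (Fin 2) (Fin 2) (ZMod n)) - 1).det = r := by
  rw [det_sub_one_fin_two]
  rfl

section Reduction

variable {m n : ℕ} (h : m ∣ n) (r : ℤ)

def Cset.reduce (g : Cset n r) : Cset m r :=
  ⟨GeneralLinearGroup.map (ZMod.castHom h (ZMod m)) g, by
    rw [mem_Cset_iff, GeneralLinearGroup.coe_map_sub_one, ← RingHom.map_det, mem_Cset_iff.1 g.2,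
      map_intCast]⟩

noncomputable def Cset.reduceFiberEquiv [IsLocalHom (ZMod.castHom h (ZMod m))] (y : Cset m r) :
    {g : Cset n r // Cset.reduce h r g = y} ≃
      {A : Matrix (Fin 2) (Fin 2) (ZMod n) //
        (ZMod.castHom h (ZMod m)).mapMatrix A = ↑y.1 - 1 ∧ A.det = r} where
  toFun g := ⟨↑g.1.1 - 1, by
    rw [← GeneralLinearGroup.coe_map_sub_one]
    exact ⟨congrArg (fun z : Cset m r ↦ (z.1 : Matrix (Fin 2) (Fin 2) (ZMod m)) - 1) g.2,
      mem_Cset_iff.1 g.1.2⟩⟩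
  invFun A :=
    have hA : (ZMod.castHom h (ZMod m)).mapMatrix (A.1 + 1) = y.1 := by
      rw [map_add, A.2.1, map_one, sub_add_cancel]
    have hA_unit : IsUnit (A.1 + 1) := IsUnit.of_map _ _ (hA ▸ y.1.isUnit)
    ⟨⟨hA_unit.unit, by rw [mem_Cset_iff, IsUnit.unit_spec, add_sub_cancel_right]; exact A.2.2⟩,
      Subtype.ext <| Units.ext hA⟩
  left_inv g := by
    apply Subtype.ext; apply Subtype.ext; apply Units.ext
    simp
  right_inv A := by
    apply Subtype.ext
    simp

end Reduction

/-- For a prime `ℓ`, `k ≥ 1` and an integer `r ≢ 0 (mod ℓ)`: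
`|C_r(ℓ^k)| = ℓ^{3(k-1)} · |C_r(ℓ)|`. -/
theorem stmt12 (ℓ k : ℕ) (hℓ : ℓ.Prime) (hk : 1 ≤ k) (r : ℤ) (hr : (r : ZMod ℓ) ≠ 0) :
    Nat.card (Cset (ℓ ^ k) r) = ℓ ^ (3 * (k - 1)) * Nat.card (Cset ℓ r) := by
  have hk₀ : k ≠ 0 := Nat.one_le_iff_ne_zero.mp hk
  have : Fact ℓ.Prime := ⟨hℓ⟩
  have := ZMod.isLocalHom_castHom_pow hℓ hk₀
  set π := ZMod.castHom (dvd_pow_self ℓ hk₀) (ZMod ℓ)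
  refine Nat.card_eq_mul_of_card_fiber (Cset.reduce (dvd_pow_self ℓ hk₀) r) fun y ↦ ?_
  obtain ⟨A₀, hA₀⟩ := RingHom.mapMatrix_surjective π (ZMod.castHom_surjective _)
    ((y.1 : Matrix (Fin 2) (Fin 2) (ZMod ℓ)) - 1)
  have hdet : π A₀.det = r := by rw [RingHom.map_det, hA₀, mem_Cset_iff.1 y.2]
  rw [Nat.card_congr (Cset.reduceFiberEquiv _ r y), ← hA₀,
    card_mapMatrix_det_fiber π (IsUnit.of_map π _ (hdet ▸ isUnit_iff_ne_zero.2 hr))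
      (by rw [hdet, map_intCast]),
    ZMod.card_castHom_fiber_zero, mul_comm 3, pow_mul, ← Nat.pow_div hk hℓ.pos, pow_one]
end
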